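/- arXiv:2602.01152 — 5 statements merged into one kernel-verified Lean document; each statement's English description precedes it below -/
import Mathlib

section
/- Let A be a fourth-order hierarchically symmetric tensor and let (x,y) with x ≠ 0, y ≠ 0 be a critical point of f(x,y) = (1/4)(xᵀx)²(yᵀy)² - (1/2)A(x,y,x,y), i.e., A·(y,x,y) = (xᵀx)(yᵀy)²x and A·(x,y,x) = (xᵀx)²(yᵀy)y. Then λ = (xᵀx)(yᵀy) > 0 is an M-eigenvalue of A with unit M-eigenvectors u = x/‖x‖ and v = y/‖y‖, i.e., A·(v,u,v) = λu and A·(u,v,u) = λv. -/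
open Finset
open scoped RealInnerProductSpace

/-- The biquadratic form `A(x,y,x,y) = ∑ a_{ijkl} x_i y_j x_k y_l`. -/
noncomputable def AQ {m n : ℕ} (a : Fin m → Fin n → Fin m → Fin n → ℝ)
    (x : EuclideanSpace ℝ (Fin m)) (y : EuclideanSpace ℝ (Fin n)) : ℝ :=
  ∑ i, ∑ j, ∑ k, ∑ l, a i j k l * x i * y j * x k * y l

/-- The contraction `A·(y,x,y) ∈ ℝ^m`, `(A·(y,x,y))_i = ∑ a_{ijkl} y_j x_k y_l`. -/
noncomputable def Ayxy {m n : ℕ} (a : Fin m → Fin n → Fin m → Fin n → ℝ)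
    (x : EuclideanSpace ℝ (Fin m)) (y : EuclideanSpace ℝ (Fin n)) :
    EuclideanSpace ℝ (Fin m) :=
  WithLp.toLp 2 (fun i => ∑ k, ∑ j, ∑ l, a i j k l * y j * x k * y l)

/-- The contraction `A·(x,y,x) ∈ ℝ^n`, `(A·(x,y,x))_l = ∑ a_{ijkl} x_i y_j x_k`. -/
noncomputable def Axyx {m n : ℕ} (a : Fin m → Fin n → Fin m → Fin n → ℝ)
    (x : EuclideanSpace ℝ (Fin m)) (y : EuclideanSpace ℝ (Fin n)) :
    EuclideanSpace ℝ (Fin n) :=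
  WithLp.toLp 2 (fun l => ∑ i, ∑ j, ∑ k, a i j k l * x i * y j * x k)

/-- The objective function `f(x,y) = (1/4)(xᵀx)²(yᵀy)² - (1/2) A(x,y,x,y)`. -/
noncomputable def fobj {m n : ℕ} (a : Fin m → Fin n → Fin m → Fin n → ℝ)
    (x : EuclideanSpace ℝ (Fin m)) (y : EuclideanSpace ℝ (Fin n)) : ℝ :=
  (1/4) * ‖x‖^4 * ‖y‖^4 - (1/2) * AQ a x y

/-- The shifted objective `f_t(x,y) = f(x,y) - (t/2)(xᵀx)(yᵀy)`. -/
noncomputable def ftobj {m n : ℕ} (a : Fin m → Fin n → Fin m → Fin n → ℝ) (t : ℝ)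
    (x : EuclideanSpace ℝ (Fin m)) (y : EuclideanSpace ℝ (Fin n)) : ℝ :=
  (1/4) * ‖x‖^4 * ‖y‖^4 - (1/2) * AQ a x y - (t/2) * (‖x‖^2 * ‖y‖^2)

/-- Hierarchical symmetry: `a_{ijkl} = a_{kjil} = a_{ilkj}`. -/
def HierSym {m n : ℕ} (a : Fin m → Fin n → Fin m → Fin n → ℝ) : Prop :=
  ∀ i j k l, a i j k l = a k j i l ∧ a i j k l = a i l k j


lemma Ayxy_smul {m n : ℕ} (a : Fin m → Fin n → Fin m → Fin n → ℝ)
    (c d : ℝ) (x : EuclideanSpace ℝ (Fin m)) (y : EuclideanSpace ℝ (Fin n)) :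
    Ayxy a (c • x) (d • y) = (c * d ^ 2) • Ayxy a x y := by
  ext i
  simp only [Ayxy, PiLp.toLp_apply, PiLp.smul_apply, smul_eq_mul, Finset.mul_sum]
  refine Finset.sum_congr rfl fun k _ => Finset.sum_congr rfl fun j _ =>
    Finset.sum_congr rfl fun l _ => ?_
  ring

lemma Axyx_smul {m n : ℕ} (a : Fin m → Fin n → Fin m → Fin n → ℝ)
    (c d : ℝ) (x : EuclideanSpace ℝ (Fin m)) (y : EuclideanSpace ℝ (Fin n)) :
    Axyx a (c • x) (d • y) = (c ^ 2 * d) • Axyx a x y := by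
  ext l
  simp only [Axyx, PiLp.toLp_apply, PiLp.smul_apply, smul_eq_mul, Finset.mul_sum]
  refine Finset.sum_congr rfl fun i _ => Finset.sum_congr rfl fun j _ =>
    Finset.sum_congr rfl fun k _ => ?_
  ring

/-- A nonzero critical point `(x,y)` of `f` yields the positive
M-eigenvalue `λ = (xᵀx)(yᵀy)` with unit M-eigenvectors `u = x/‖x‖`, `v = y/‖y‖`. -/
theorem stmt2 {m n : ℕ} (a : Fin m → Fin n → Fin m → Fin n → ℝ)
    (hsym : HierSym a)
    (x : EuclideanSpace ℝ (Fin m)) (y : EuclideanSpace ℝ (Fin n))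
    (hx : x ≠ 0) (hy : y ≠ 0)
    (hcrit1 : Ayxy a x y = (‖x‖ ^ 2 * ‖y‖ ^ 4) • x)
    (hcrit2 : Axyx a x y = (‖x‖ ^ 4 * ‖y‖ ^ 2) • y) :
    0 < ‖x‖ ^ 2 * ‖y‖ ^ 2 ∧
      ‖(‖x‖⁻¹ • x : EuclideanSpace ℝ (Fin m))‖ = 1 ∧
      ‖(‖y‖⁻¹ • y : EuclideanSpace ℝ (Fin n))‖ = 1 ∧
      Ayxy a (‖x‖⁻¹ • x) (‖y‖⁻¹ • y) = (‖x‖ ^ 2 * ‖y‖ ^ 2) • (‖x‖⁻¹ • x) ∧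
      Axyx a (‖x‖⁻¹ • x) (‖y‖⁻¹ • y) = (‖x‖ ^ 2 * ‖y‖ ^ 2) • (‖y‖⁻¹ • y) := by
  have hxn : ‖x‖ ≠ 0 := norm_ne_zero_iff.mpr hx
  have hyn : ‖y‖ ≠ 0 := norm_ne_zero_iff.mpr hy
  have hxp : (0:ℝ) < ‖x‖ := norm_pos_iff.mpr hx
  have hyp : (0:ℝ) < ‖y‖ := norm_pos_iff.mpr hy
  refine ⟨by positivity, ?_, ?_, ?_, ?_⟩
  · rw [norm_smul, norm_inv, norm_norm]; field_simp
  · rw [norm_smul, norm_inv, norm_norm]; field_simp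
  · rw [Ayxy_smul, hcrit1, smul_smul, smul_smul]
    congr 1
    field_simp
  · rw [Axyx_smul, hcrit2, smul_smul, smul_smul]
    congr 1
    field_simp
end

section
/- If all M-eigenvalues of a hierarchically symmetric tensor A are non-positive, then f(x,y) = (1/4)(xᵀx)²(yᵀy)² - (1/2)A(x,y,x,y) has no critical point (x,y) with both x ≠ 0 and y ≠ 0. -/
open Finset
open scoped RealInnerProductSpace

/-- If all M-eigenvalues of `A` are non-positive, then `f` has no
critical point `(x,y)` with both `x ≠ 0` and `y ≠ 0`. -/
theorem stmt5 {m n : ℕ} (a : Fin m → Fin n → Fin m → Fin n → ℝ)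
    (hsym : HierSym a)
    (hnp : ∀ (lam : ℝ) (u : EuclideanSpace ℝ (Fin m)) (v : EuclideanSpace ℝ (Fin n)),
        ‖u‖ = 1 → ‖v‖ = 1 → Ayxy a u v = lam • u → Axyx a u v = lam • v → lam ≤ 0) :
    ¬ ∃ (x : EuclideanSpace ℝ (Fin m)) (y : EuclideanSpace ℝ (Fin n)),
        x ≠ 0 ∧ y ≠ 0 ∧
        Ayxy a x y = (‖x‖ ^ 2 * ‖y‖ ^ 4) • x ∧
        Axyx a x y = (‖x‖ ^ 4 * ‖y‖ ^ 2) • y := by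
  rintro ⟨x, y, hx, hy, h1, h2⟩
  have hxn : (0:ℝ) < ‖x‖ := norm_pos_iff.mpr hx
  have hyn : (0:ℝ) < ‖y‖ := norm_pos_iff.mpr hy
  set u : EuclideanSpace ℝ (Fin m) := ‖x‖⁻¹ • x with hu
  set v : EuclideanSpace ℝ (Fin n) := ‖y‖⁻¹ • y with hv
  have hun : ‖u‖ = 1 := by
    rw [hu, norm_smul]; simp [abs_of_pos (inv_pos.mpr hxn), inv_mul_cancel₀ hxn.ne']
  have hvn : ‖v‖ = 1 := by
    rw [hv, norm_smul]; simp [abs_of_pos (inv_pos.mpr hyn), inv_mul_cancel₀ hyn.ne']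
  set lam : ℝ := ‖x‖ ^ 2 * ‖y‖ ^ 2 with hlam
  have e1 : Ayxy a u v = lam • u := by
    rw [hu, hv, Ayxy_smul, h1, smul_smul, smul_smul]
    congr 1
    field_simp [hlam]
    ring
  have e2 : Axyx a u v = lam • v := by
    rw [hu, hv, Axyx_smul, h2, smul_smul, smul_smul]
    congr 1
    field_simp [hlam]
    ring
  have := hnp lam u v hun hvn e1 e2
  have : (0:ℝ) < lam := by positivity
  linarith [hnp lam u v hun hvn e1 e2]
end

section
/- Let g ∈ ℝᴺ, g ≠ 0, γ > 0, and directions d₁,...,d_N ∈ ℝᴺ. Define β_i = ‖g‖² φ_i† where a† = 0 if a = 0 and a† = 1/a otherwise, with φ₁ > max{gᵀd₁/γ, 0} and φ_i ≥ max{gᵀd_i/γ, 0} for i ≥ 2. Then the direction d = -γ g + (1/N)∑_{i=1}^N β_i d_i satisfies gᵀd < 0. -/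
open scoped RealInnerProductSpace

/-- `a† = 0` if `a = 0`, and `a† = 1/a` otherwise. -/
noncomputable def dagger (a : ℝ) : ℝ := if a = 0 then 0 else 1 / a

lemma dagger_key {γ c φ : ℝ} (hγ : 0 < γ) (h : φ ≥ max (c / γ) 0) :
    dagger φ * c ≤ γ := by
  rcases eq_or_ne φ 0 with h0 | h0
  · simp [dagger, h0, hγ.le]
  · have hφpos : 0 < φ := lt_of_le_of_ne (le_trans (le_max_right _ _) h) (Ne.symm h0)
    have hc : c / γ ≤ φ := le_trans (le_max_left _ _) h
    have : c ≤ φ * γ := (div_le_iff₀ hγ).mp hc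
    rw [dagger, if_neg h0, one_div, inv_mul_eq_div, div_le_iff₀ hφpos]
    nlinarith

lemma dagger_key_strict {γ c φ : ℝ} (hγ : 0 < γ) (h : φ > max (c / γ) 0) :
    dagger φ * c < γ := by
  have hφpos : 0 < φ := lt_of_le_of_lt (le_max_right _ _) h
  have hc : c / γ < φ := lt_of_le_of_lt (le_max_left _ _) h
  have : c < φ * γ := (div_lt_iff₀ hγ).mp hc
  rw [dagger, if_neg hφpos.ne', one_div, inv_mul_eq_div, div_lt_iff₀ hφpos]
  nlinarith

/-- The memory gradient direction `d = -γg + (1/N)∑ βᵢ dᵢ` with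
`βᵢ = ‖g‖² φᵢ†`, where `φ₁ > max{gᵀd₁/γ, 0}` (strict for the first index) and
`φᵢ ≥ max{gᵀdᵢ/γ, 0}` for the others, satisfies `gᵀd < 0`. -/
theorem stmt11 {M N : ℕ} (hN : 0 < N) (g : EuclideanSpace ℝ (Fin M)) (hg : g ≠ 0)
    (γ : ℝ) (hγ : 0 < γ) (d : Fin N → EuclideanSpace ℝ (Fin M)) (φ : Fin N → ℝ)
    (hφ1 : φ ⟨0, hN⟩ > max (⟪g, d ⟨0, hN⟩⟫ / γ) 0)
    (hφi : ∀ i : Fin N, i ≠ ⟨0, hN⟩ → φ i ≥ max (⟪g, d i⟫ / γ) 0) :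
    ⟪g, -γ • g + (N : ℝ)⁻¹ • ∑ i, (‖g‖ ^ 2 * dagger (φ i)) • d i⟫ < 0 := by
  have hsum : ∑ i, dagger (φ i) * ⟪g, d i⟫ < (N : ℝ) * γ := by
    have := Finset.sum_lt_sum (f := fun i => dagger (φ i) * ⟪g, d i⟫)
      (g := fun _ : Fin N => γ) (s := Finset.univ)
      (fun i _ => by
        rcases eq_or_ne i ⟨0, hN⟩ with rfl | h
        · exact (dagger_key_strict hγ hφ1).le
        · exact dagger_key hγ (hφi i h))
      ⟨⟨0, hN⟩, Finset.mem_univ _, dagger_key_strict hγ hφ1⟩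
    simpa using this
  have hgn : 0 < ‖g‖ := norm_pos_iff.mpr hg
  have hgpos : (0 : ℝ) < ‖g‖ ^ 2 := by positivity
  have hNpos : (0 : ℝ) < (N : ℝ) := by exact_mod_cast hN
  rw [inner_add_right, inner_smul_right, inner_smul_right, real_inner_self_eq_norm_sq,
    inner_sum]
  simp only [inner_smul_right]
  have hrw : ∑ i, (‖g‖ ^ 2 * dagger (φ i)) * ⟪g, d i⟫
      = ‖g‖ ^ 2 * ∑ i, dagger (φ i) * ⟪g, d i⟫ := by
    rw [Finset.mul_sum]; congr 1; ext i; ring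
  rw [hrw]
  have h1 : (N : ℝ)⁻¹ * (‖g‖ ^ 2 * ∑ i, dagger (φ i) * ⟪g, d i⟫)
      < (N : ℝ)⁻¹ * (‖g‖ ^ 2 * ((N : ℝ) * γ)) := by
    apply mul_lt_mul_of_pos_left _ (by positivity)
    exact mul_lt_mul_of_pos_left hsum hgpos
  have h2 : (N : ℝ)⁻¹ * (‖g‖ ^ 2 * ((N : ℝ) * γ)) = γ * ‖g‖ ^ 2 := by
    field_simp
  nlinarith
end

section
/- Under the stronger choice φ_i satisfying gᵀd_i + ‖g‖‖d_i‖ ≤ γφ_i (strict for i=1) and γ ≥ γ̄ > 0, the memory gradient direction d = -γg + (1/N)∑_{i=1}^N (‖g‖² φ_i†) d_i satisfies the sufficient descent condition gᵀd ≤ -(γ̄/2)‖g‖². -/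
open scoped RealInnerProductSpace

/-- Under the stronger choice `gᵀdᵢ + ‖g‖‖dᵢ‖ ≤ γφᵢ` (strict for the
first index) and `γ ≥ γ̄ > 0`, the memory gradient direction
`d = -γg + (1/N)∑ (‖g‖² φᵢ†) dᵢ` satisfies `gᵀd ≤ -(γ̄/2)‖g‖²`. -/
theorem stmt12 {M N : ℕ} (hN : 0 < N) (g : EuclideanSpace ℝ (Fin M)) (hg : g ≠ 0)
    (γ γbar : ℝ) (hγbar : 0 < γbar) (hγ : γbar ≤ γ)
    (d : Fin N → EuclideanSpace ℝ (Fin M)) (φ : Fin N → ℝ)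
    (hφ1 : ⟪g, d ⟨0, hN⟩⟫ + ‖g‖ * ‖d ⟨0, hN⟩‖ < γ * φ ⟨0, hN⟩)
    (hφi : ∀ i : Fin N, i ≠ ⟨0, hN⟩ → ⟪g, d i⟫ + ‖g‖ * ‖d i‖ ≤ γ * φ i) :
    ⟪g, -γ • g + (N : ℝ)⁻¹ • ∑ i, (‖g‖ ^ 2 * dagger (φ i)) • d i⟫ ≤
      -(γbar / 2) * ‖g‖ ^ 2 := by
  have hγ0 : 0 < γ := lt_of_lt_of_le hγbar hγ
  have key : ∀ i : Fin N, dagger (φ i) * ⟪g, d i⟫ ≤ γ / 2 := by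
    intro i
    have hcs : ⟪g, d i⟫ ≤ ‖g‖ * ‖d i‖ := real_inner_le_norm g (d i)
    have hcs' : -(‖g‖ * ‖d i‖) ≤ ⟪g, d i⟫ :=
      neg_le_of_abs_le (abs_real_inner_le_norm g (d i))
    have hb : ⟪g, d i⟫ + ‖g‖ * ‖d i‖ ≤ γ * φ i := by
      by_cases h : i = ⟨0, hN⟩
      · rw [h]; exact hφ1.le
      · exact hφi i h
    have hφnn : 0 ≤ φ i := by nlinarith
    rcases eq_or_lt_of_le hφnn with h0 | hpos
    · rw [dagger, if_pos h0.symm, zero_mul]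
      positivity
    · rw [dagger, if_neg hpos.ne']
      rcases le_or_gt ⟪g, d i⟫ 0 with hs | hs
      · have h1 : (0:ℝ) < 1 / φ i := by positivity
        nlinarith
      · rw [div_mul_eq_mul_div, one_mul, div_le_div_iff₀ hpos (by norm_num : (0:ℝ) < 2)]
        nlinarith
  have hexp : ⟪g, -γ • g + (N : ℝ)⁻¹ • ∑ i, (‖g‖ ^ 2 * dagger (φ i)) • d i⟫
      = -γ * ‖g‖ ^ 2 + (N : ℝ)⁻¹ * ∑ i, ‖g‖ ^ 2 * (dagger (φ i) * ⟪g, d i⟫) := by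
    rw [inner_add_right, inner_smul_right, inner_smul_right, inner_sum,
      real_inner_self_eq_norm_sq]
    have hs : ∑ i, ⟪g, (‖g‖ ^ 2 * dagger (φ i)) • d i⟫
        = ∑ i, ‖g‖ ^ 2 * (dagger (φ i) * ⟪g, d i⟫) :=
      Finset.sum_congr rfl fun i _ => by rw [inner_smul_right]; ring
    rw [hs]
  rw [hexp]
  have hsum : ∑ i, ‖g‖ ^ 2 * (dagger (φ i) * ⟪g, d i⟫) ≤ (N : ℝ) * (‖g‖ ^ 2 * (γ / 2)) := by
    calc ∑ i, ‖g‖ ^ 2 * (dagger (φ i) * ⟪g, d i⟫)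
        ≤ ∑ _i : Fin N, ‖g‖ ^ 2 * (γ / 2) :=
          Finset.sum_le_sum fun i _ =>
            mul_le_mul_of_nonneg_left (key i) (sq_nonneg _)
      _ = (N : ℝ) * (‖g‖ ^ 2 * (γ / 2)) := by
          rw [Finset.sum_const, Finset.card_univ, Fintype.card_fin]; push_cast; ring
  have hNpos : (0:ℝ) < N := by exact_mod_cast hN
  have hNinv : (0:ℝ) < (N:ℝ)⁻¹ := by positivity
  have h2 : (N : ℝ)⁻¹ * ∑ i, ‖g‖ ^ 2 * (dagger (φ i) * ⟪g, d i⟫)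
      ≤ ‖g‖ ^ 2 * (γ / 2) := by
    have := mul_le_mul_of_nonneg_left hsum hNinv.le
    calc (N : ℝ)⁻¹ * ∑ i, ‖g‖ ^ 2 * (dagger (φ i) * ⟪g, d i⟫)
        ≤ (N:ℝ)⁻¹ * ((N : ℝ) * (‖g‖ ^ 2 * (γ / 2))) := this
      _ = ‖g‖ ^ 2 * (γ / 2) := by field_simp
  nlinarith [sq_nonneg ‖g‖]
end

section
/- Let d = -γg + (1/N)∑_{i=1}^N β_i d_i with β_i = ‖g‖² φ_i†, β_i ≥ 0, satisfying γφ_i ≥ gᵀd_i + ‖g‖‖d_i‖ for all i and gᵀd < 0. Then ‖d‖²/(gᵀd)² ≤ 2/‖g‖². -/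
open scoped RealInnerProductSpace

/-- For the memory gradient direction `d = -γg + (1/N)∑ βᵢ dᵢ` with
`βᵢ = ‖g‖² φᵢ†`, `βᵢ ≥ 0`, `γφᵢ ≥ gᵀdᵢ + ‖g‖‖dᵢ‖` for all `i`, and `gᵀd < 0`, one
has `‖d‖²/(gᵀd)² ≤ 2/‖g‖²`. -/
theorem stmt14 {M N : ℕ} (hN : 0 < N) (g : EuclideanSpace ℝ (Fin M)) (hg : g ≠ 0)
    (γ : ℝ) (hγ : 0 < γ) (d : Fin N → EuclideanSpace ℝ (Fin M)) (φ : Fin N → ℝ)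
    (hβ : ∀ i, 0 ≤ ‖g‖ ^ 2 * dagger (φ i))
    (hφ : ∀ i, ⟪g, d i⟫ + ‖g‖ * ‖d i‖ ≤ γ * φ i)
    (dk : EuclideanSpace ℝ (Fin M))
    (hdk : dk = -γ • g + (N : ℝ)⁻¹ • ∑ i, (‖g‖ ^ 2 * dagger (φ i)) • d i)
    (hdesc : ⟪g, dk⟫ < 0) :
    ‖dk‖ ^ 2 / ⟪g, dk⟫ ^ 2 ≤ 2 / ‖g‖ ^ 2 := by
  have hgnorm : (0:ℝ) < ‖g‖ := norm_pos_iff.mpr hg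
  set s : EuclideanSpace ℝ (Fin M) :=
    (N : ℝ)⁻¹ • ∑ i, (‖g‖ ^ 2 * dagger (φ i)) • d i with hs
  have hβφ : ∀ i, (‖g‖ ^ 2 * dagger (φ i)) * (γ * φ i) ≤ γ * ‖g‖ ^ 2 := by
    intro i
    have hb : (‖g‖ ^ 2 * dagger (φ i)) * φ i ≤ ‖g‖ ^ 2 := by
      by_cases h : φ i = 0
      · simp [dagger, h]
      · simp only [dagger, h, if_false]
        rw [mul_assoc, one_div, inv_mul_cancel₀ h, mul_one]
    nlinarith [hb, hγ.le]
  have hgs : ⟪g, s⟫ = (N:ℝ)⁻¹ * ∑ i, (‖g‖ ^ 2 * dagger (φ i)) * ⟪g, d i⟫ := by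
    simp [hs, inner_smul_right, inner_sum]
  have hns : ‖s‖ ≤ (N:ℝ)⁻¹ * ∑ i, (‖g‖ ^ 2 * dagger (φ i)) * ‖d i‖ := by
    rw [hs, norm_smul, Real.norm_eq_abs, abs_of_nonneg (by positivity)]
    gcongr
    refine (norm_sum_le _ _).trans (le_of_eq (Finset.sum_congr rfl fun i _ => ?_))
    rw [norm_smul, Real.norm_eq_abs, abs_of_nonneg (hβ i)]
  have hsum : ∑ i, ((‖g‖ ^ 2 * dagger (φ i)) * ‖d i‖) * ‖g‖
      ≤ ∑ i, (γ * ‖g‖ ^ 2 - (‖g‖ ^ 2 * dagger (φ i)) * ⟪g, d i⟫) := by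
    refine Finset.sum_le_sum fun i _ => ?_
    nlinarith [mul_le_mul_of_nonneg_left (hφ i) (hβ i), hβφ i]
  have hkey : ‖g‖ * ‖s‖ ≤ γ * ‖g‖ ^ 2 - ⟪g, s⟫ := by
    have h1 : ‖g‖ * ‖s‖ ≤ (N:ℝ)⁻¹ * ∑ i, ((‖g‖ ^ 2 * dagger (φ i)) * ‖d i‖) * ‖g‖ := by
      have := mul_le_mul_of_nonneg_left hns hgnorm.le
      calc ‖g‖ * ‖s‖ ≤ ‖g‖ * ((N:ℝ)⁻¹ * ∑ i, (‖g‖ ^ 2 * dagger (φ i)) * ‖d i‖) := this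
        _ = (N:ℝ)⁻¹ * ∑ i, ((‖g‖ ^ 2 * dagger (φ i)) * ‖d i‖) * ‖g‖ := by
            simp only [Finset.mul_sum]
            apply Finset.sum_congr rfl
            intro i _
            ring
    refine h1.trans ?_
    have h2 := mul_le_mul_of_nonneg_left hsum (by positivity : (0:ℝ) ≤ (N:ℝ)⁻¹)
    refine h2.trans (le_of_eq ?_)
    rw [Finset.sum_sub_distrib, Finset.sum_const, Finset.card_univ, Fintype.card_fin,
      nsmul_eq_mul, hgs, mul_sub]
    have hNne : (N:ℝ) ≠ 0 := Nat.cast_ne_zero.mpr hN.ne'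
    field_simp
  have hgdk : ⟪g, dk⟫ = ⟪g, s⟫ - γ * ‖g‖ ^ 2 := by
    rw [hdk]
    rw [inner_add_right, inner_smul_right, real_inner_self_eq_norm_sq]
    ring
  have hdk2 : ‖dk‖ ^ 2 = ‖s‖ ^ 2 - 2*γ*⟪g,s⟫ + γ^2*‖g‖^2 := by
    rw [hdk, show -γ • g + s = (-γ) • g + s by rw [neg_smul]]
    rw [norm_add_sq_real, inner_smul_left, norm_smul, Real.norm_eq_abs,
      abs_neg, abs_of_nonneg hγ.le]
    simp [mul_pow]
    ring
  rw [div_le_div_iff₀ (by nlinarith [hdesc] : (0:ℝ) < ⟪g, dk⟫ ^ 2) (by positivity)]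
  have h2 : (‖g‖ * ‖s‖) * (‖g‖ * ‖s‖) ≤ (γ * ‖g‖ ^ 2 - ⟪g, s⟫) * (γ * ‖g‖ ^ 2 - ⟪g, s⟫) :=
    mul_self_le_mul_self (by positivity) hkey
  rw [hdk2, hgdk]
  nlinarith [h2, sq_nonneg (⟪g, s⟫ : ℝ)]
end
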